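/- Let φ be a modal formula in ∇-normal form over propositional signature σ, let P be a set of proposition letters, and let ∃̃P.φ denote the formula obtained from φ by the recursive removal operation (∃̃P.⊤ = ⊤; ∃̃P.⊥ = ⊥; ∃̃P.π = π'; ∃̃P.(π∧∇Ψ) = π' ∧ ∇{∃̃P.ψ : ψ ∈ Ψ}; ∃̃P.(φ₁∨φ₂) = ∃̃P.φ₁ ∨ ∃̃P.φ₂, where π' is obtained from π by dropping all conjuncts that are literals of letters in P). Then for every pointed Kripke model (M,w): M,w ⊨ ∃̃P.φ if and only if there is a pointed Kripke model (N,v) with N,v ⊨ φ such that (M,w) and (N,v) are (σ∖P)-bisimilar. -/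

import Mathlib

inductive ModalFormula (α : Type) : Type
  | atom : α → ModalFormula α
  | top  : ModalFormula α
  | bot  : ModalFormula α
  | neg  : ModalFormula α → ModalFormula α
  | or   : ModalFormula α → ModalFormula α → ModalFormula α
  | and  : ModalFormula α → ModalFormula α → ModalFormula α
  | dia  : ModalFormula α → ModalFormula α
  | box  : ModalFormula α → ModalFormula α

structure KripkeModel (α : Type) where
  World : Type
  R : World → World → Prop
  V : α → Set World

def Satisfies {α : Type} (M : KripkeModel α) : M.World → ModalFormula α → Prop
  | w, .atom p  => w ∈ M.V p
  | _, .top     => True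
  | _, .bot     => False
  | w, .neg φ   => ¬ Satisfies M w φ
  | w, .or φ ψ  => Satisfies M w φ ∨ Satisfies M w ψ
  | w, .and φ ψ => Satisfies M w φ ∧ Satisfies M w ψ
  | w, .dia φ   => ∃ v, M.R w v ∧ Satisfies M v φ
  | w, .box φ   => ∀ v, M.R w v → Satisfies M v φ

def Valid {α : Type} (φ : ModalFormula α) : Prop :=
  ∀ (M : KripkeModel α) (w : M.World), Satisfies M w φ

def ModalFormula.impl {α : Type} (φ ψ : ModalFormula α) : ModalFormula α :=
  .or (.neg φ) ψ

def sig {α : Type} : ModalFormula α → Set α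
  | .atom p  => {p}
  | .top     => ∅
  | .bot     => ∅
  | .neg φ   => sig φ
  | .or φ ψ  => sig φ ∪ sig ψ
  | .and φ ψ => sig φ ∪ sig ψ
  | .dia φ   => sig φ
  | .box φ   => sig φ

def IsBisimulation {α : Type} (τ : Set α) (M M' : KripkeModel α)
    (Z : M.World → M'.World → Prop) : Prop :=
  ∀ w w', Z w w' →
    (∀ p ∈ τ, (w ∈ M.V p ↔ w' ∈ M'.V p)) ∧
    (∀ v, M.R w v → ∃ v', M'.R w' v' ∧ Z v v') ∧
    (∀ v', M'.R w' v' → ∃ v, M.R w v ∧ Z v v')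

def Bisimilar {α : Type} (τ : Set α) (M : KripkeModel α) (w : M.World)
    (M' : KripkeModel α) (w' : M'.World) : Prop :=
  ∃ Z, IsBisimulation τ M M' Z ∧ Z w w'

mutual
  /-- Raw syntax of formulas in ∇-normal form:
  `φ ::= ⊤ | ⊥ | π | ∇Φ | π ∧ ∇Φ | φ ∨ φ`, where `π` is a conjunction of
  literals (represented as a list of pairs `(p, polarity)`) and `Φ` is a finite
  set (represented as a list) of formulas in ∇-normal form. -/
  inductive NForm (α : Type) : Type
    | top : NForm α
    | bot : NForm α
    | lits : List (α × Bool) → NForm α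
    | nabla : NList α → NForm α
    | litsNabla : List (α × Bool) → NList α → NForm α
    | or : NForm α → NForm α → NForm α
  /-- Finite lists of formulas in ∇-normal form. -/
  inductive NList (α : Type) : Type
    | nil : NList α
    | cons : NForm α → NList α → NList α
end

mutual
  /-- Well-formedness: each conjunction of literals is nonempty and over
  pairwise distinct proposition letters (hence consistent). -/
  inductive NForm.Wf {α : Type} : NForm α → Prop
    | top : NForm.Wf .top
    | bot : NForm.Wf .bot
    | lits {l : List (α × Bool)} :
        l ≠ [] → (l.map Prod.fst).Nodup → NForm.Wf (.lits l)
    | nabla {Φ : NList α} : NList.Wf Φ → NForm.Wf (.nabla Φ)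
    | litsNabla {l : List (α × Bool)} {Φ : NList α} :
        l ≠ [] → (l.map Prod.fst).Nodup → NList.Wf Φ → NForm.Wf (.litsNabla l Φ)
    | or {φ ψ : NForm α} : NForm.Wf φ → NForm.Wf ψ → NForm.Wf (.or φ ψ)
  inductive NList.Wf {α : Type} : NList α → Prop
    | nil : NList.Wf .nil
    | cons {φ : NForm α} {Φ : NList α} : NForm.Wf φ → NList.Wf Φ → NList.Wf (.cons φ Φ)
end

/-- The conjunction of a list of literals, as a modal formula. -/
def litsToModal {α : Type} : List (α × Bool) → ModalFormula α
  | [] => .top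
  | (p, true) :: l => .and (.atom p) (litsToModal l)
  | (p, false) :: l => .and (.neg (.atom p)) (litsToModal l)

mutual
  /-- Translation of ∇-normal forms into modal formulas, where `∇Φ` abbreviates
  `⋀_{φ∈Φ} ◇φ ∧ □⋁Φ`. -/
  def NForm.toModal {α : Type} : NForm α → ModalFormula α
    | .top => .top
    | .bot => .bot
    | .lits l => litsToModal l
    | .nabla Φ => .and (NList.diaAll Φ) (.box (NList.orAll Φ))
    | .litsNabla l Φ => .and (litsToModal l) (.and (NList.diaAll Φ) (.box (NList.orAll Φ)))
    | .or φ ψ => .or φ.toModal ψ.toModal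
  /-- `⋀_{φ∈Φ} ◇φ`. -/
  def NList.diaAll {α : Type} : NList α → ModalFormula α
    | .nil => .top
    | .cons φ Φ => .and (.dia φ.toModal) (NList.diaAll Φ)
  /-- `⋁Φ`. -/
  def NList.orAll {α : Type} : NList α → ModalFormula α
    | .nil => .bot
    | .cons φ Φ => .or φ.toModal (NList.orAll Φ)
end

attribute [local instance] Classical.propDecidable

mutual
  /-- The removal operation `∃̃P.φ`: drop from `φ` all literals whose
  proposition letter belongs to `P`. -/
  noncomputable def NForm.remove {α : Type} (P : Set α) : NForm α → NForm α
    | .top => .top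
    | .bot => .bot
    | .lits l => .lits (l.filter (fun pb => decide (pb.1 ∉ P)))
    | .nabla Φ => .nabla (NList.remove P Φ)
    | .litsNabla l Φ =>
        .litsNabla (l.filter (fun pb => decide (pb.1 ∉ P))) (NList.remove P Φ)
    | .or φ ψ => .or (φ.remove P) (ψ.remove P)
  noncomputable def NList.remove {α : Type} (P : Set α) : NList α → NList α
    | .nil => .nil
    | .cons φ Φ => .cons (φ.remove P) (NList.remove P Φ)
end


/-!
Removal only weakens a ∇-normal form, since `∇` is monotone in its arguments, and `∃̃P.φ` does
not mention `P`; so every model `(σ \ P)`-bisimilar to a model of `φ` satisfies `∃̃P.φ`.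

Conversely, if `M, w ⊨ ∃̃P.φ`, take as worlds the pairs `(u, χ)` of a world of `M` and a
∨-free formula `χ` with `M, u ⊨ ∃̃P.χ`; the successors of `(u, χ)` are the `(v, χ')` with
`u R v` and `χ'` a disjunct of an argument of the `∇` in `χ`. Letters outside `P` are valued as
in `M`, letters in `P` are true exactly where `χ` asserts them, which is consistent because the
literals of `χ` are over distinct letters. The first projection is a bisimulation off `P`, and
by induction on `φ`, `(u, χ) ⊨ φ` whenever `χ` is a disjunct of `φ`.
-/

namespace NList

variable {α : Type}

def toList : NList α → List (NForm α)
  | nil => []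
  | cons φ Φ => φ :: toList Φ

@[simp]
theorem toList_nil : (nil : NList α).toList = [] := rfl

@[simp]
theorem toList_cons (φ : NForm α) (Φ : NList α) : (cons φ Φ).toList = φ :: Φ.toList := rfl

@[simp]
theorem toList_remove (P : Set α) :
    ∀ Φ : NList α, (Φ.remove P).toList = Φ.toList.map (NForm.remove P)
  | nil => rfl
  | cons φ Φ => by simp [NList.remove, toList_remove P Φ]

theorem Wf.of_mem : ∀ {Φ : NList α}, Φ.Wf → ∀ {ψ : NForm α}, ψ ∈ Φ.toList → ψ.Wf
  | .nil, _, _, h => by simp at h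
  | .cons _ _, .cons hφ hΦ, _, h => by
      rcases List.mem_cons.mp h with rfl | h
      exacts [hφ, of_mem hΦ h]

@[simp]
theorem satisfies_diaAll (K : KripkeModel α) (x : K.World) : ∀ Φ : NList α,
    Satisfies K x Φ.diaAll ↔ ∀ ψ ∈ Φ.toList, ∃ y, K.R x y ∧ Satisfies K y ψ.toModal
  | nil => by simp [diaAll, Satisfies]
  | cons φ Φ => by simp [diaAll, Satisfies, satisfies_diaAll K x Φ]

@[simp]
theorem satisfies_orAll (K : KripkeModel α) (x : K.World) : ∀ Φ : NList α,
    Satisfies K x Φ.orAll ↔ ∃ ψ ∈ Φ.toList, Satisfies K x ψ.toModal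
  | nil => by simp [orAll, Satisfies]
  | cons φ Φ => by simp [orAll, Satisfies, satisfies_orAll K x Φ]

theorem sig_diaAll : ∀ Φ : NList α, sig Φ.diaAll = ⋃ ψ ∈ Φ.toList, sig ψ.toModal
  | nil => by simp [diaAll, sig]
  | cons φ Φ => by simp [diaAll, sig, sig_diaAll Φ]

theorem sig_orAll : ∀ Φ : NList α, sig Φ.orAll = ⋃ ψ ∈ Φ.toList, sig ψ.toModal
  | nil => by simp [orAll, sig]
  | cons φ Φ => by simp [orAll, sig, sig_orAll Φ]

end NList

section Literals

variable {α : Type}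

@[simp]
theorem satisfies_litsToModal (K : KripkeModel α) (x : K.World) : ∀ l : List (α × Bool),
    Satisfies K x (litsToModal l) ↔ ∀ pb ∈ l, (x ∈ K.V pb.1 ↔ pb.2 = true)
  | [] => by simp [litsToModal, Satisfies]
  | (p, true) :: l => by simp [litsToModal, Satisfies, satisfies_litsToModal K x l]
  | (p, false) :: l => by simp [litsToModal, Satisfies, satisfies_litsToModal K x l]

theorem sig_litsToModal : ∀ l : List (α × Bool), sig (litsToModal l) = {p | p ∈ l.map Prod.fst}
  | [] => by simp [litsToModal, sig]
  | (p, true) :: l => by ext; simp [litsToModal, sig, sig_litsToModal l]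
  | (p, false) :: l => by ext; simp [litsToModal, sig, sig_litsToModal l]

end Literals

namespace NForm

variable {α : Type}

@[elab_as_elim]
theorem induction_on {motive : NForm α → Prop} (φ : NForm α) (top : motive top)
    (bot : motive bot) (lits : ∀ l, motive (lits l))
    (nabla : ∀ Φ : NList α, (∀ ψ ∈ Φ.toList, motive ψ) → motive (nabla Φ))
    (litsNabla : ∀ l (Φ : NList α), (∀ ψ ∈ Φ.toList, motive ψ) → motive (litsNabla l Φ))
    (or : ∀ φ ψ, motive φ → motive ψ → motive (or φ ψ)) : motive φ :=
  NForm.rec (motive_2 := fun Φ => ∀ ψ ∈ Φ.toList, motive ψ) top bot lits nabla litsNabla or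
    (by simp) (fun _ _ hφ hΦ => by simpa [hφ] using hΦ) φ

@[simp]
theorem satisfies_nabla (K : KripkeModel α) (x : K.World) (Φ : NList α) :
    Satisfies K x (nabla Φ).toModal ↔
      (∀ ψ ∈ Φ.toList, ∃ y, K.R x y ∧ Satisfies K y ψ.toModal) ∧
        ∀ y, K.R x y → ∃ ψ ∈ Φ.toList, Satisfies K y ψ.toModal := by
  simp [toModal, Satisfies]

def disjuncts : NForm α → List (NForm α)
  | top => [top]
  | bot => [bot]
  | lits l => [lits l]
  | nabla Φ => [nabla Φ]
  | litsNabla l Φ => [litsNabla l Φ]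
  | or φ ψ => φ.disjuncts ++ ψ.disjuncts

theorem satisfies_iff_exists_mem_disjuncts (K : KripkeModel α) (x : K.World) (φ : NForm α) :
    Satisfies K x φ.toModal ↔ ∃ χ ∈ φ.disjuncts, Satisfies K x χ.toModal := by
  induction φ using induction_on with
  | or φ ψ ihφ ihψ => simp [disjuncts, toModal, Satisfies, ihφ, ihψ, or_and_right, exists_or]
  | _ => simp [disjuncts]

theorem disjuncts_remove (P : Set α) (φ : NForm α) :
    (φ.remove P).disjuncts = φ.disjuncts.map (remove P) := by
  induction φ using induction_on with
  | or φ ψ ihφ ihψ => simp [disjuncts, remove, ihφ, ihψ]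
  | _ => simp [disjuncts, remove]

theorem satisfies_remove_iff_exists_mem_disjuncts (P : Set α) (K : KripkeModel α)
    (x : K.World) (φ : NForm α) :
    Satisfies K x (φ.remove P).toModal ↔
      ∃ χ ∈ φ.disjuncts, Satisfies K x (χ.remove P).toModal := by
  simp [satisfies_iff_exists_mem_disjuncts _ _ (φ.remove P), disjuncts_remove]

theorem satisfies_remove_lits_of_satisfies_lits {P : Set α} {K : KripkeModel α} {x : K.World}
    {l : List (α × Bool)} (hx : Satisfies K x (lits l).toModal) :
    Satisfies K x ((lits l).remove P).toModal := by
  simp only [remove, toModal, satisfies_litsToModal, List.mem_filter] at hx ⊢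
  exact fun pb hpb => hx pb hpb.1

theorem satisfies_remove_nabla_of_satisfies_nabla {P : Set α} {K : KripkeModel α} {x : K.World}
    {Φ : NList α}
    (h : ∀ ψ ∈ Φ.toList, ∀ y : K.World,
      Satisfies K y ψ.toModal → Satisfies K y (ψ.remove P).toModal)
    (hx : Satisfies K x (nabla Φ).toModal) : Satisfies K x ((nabla Φ).remove P).toModal := by
  simp only [satisfies_nabla, remove, NList.toList_remove, List.mem_map, forall_exists_index,
    and_imp, forall_apply_eq_imp_iff₂, exists_exists_and_eq_and] at hx ⊢
  exact ⟨fun ψ hψ => (hx.1 ψ hψ).imp fun y => And.imp_right (h ψ hψ y),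
    fun y hy => (hx.2 y hy).imp fun ψ ⟨hψ, hy⟩ => ⟨hψ, h ψ hψ y hy⟩⟩

theorem satisfies_remove_of_satisfies (P : Set α) {K : KripkeModel α} {x : K.World}
    {φ : NForm α} (hx : Satisfies K x φ.toModal) : Satisfies K x (φ.remove P).toModal := by
  induction φ using induction_on generalizing x with
  | top | bot => exact hx
  | lits l => exact satisfies_remove_lits_of_satisfies_lits hx
  | nabla Φ ih => exact satisfies_remove_nabla_of_satisfies_nabla (fun ψ hψ _ => ih ψ hψ) hx
  | litsNabla l Φ ih =>
    exact ⟨satisfies_remove_lits_of_satisfies_lits hx.1,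
      satisfies_remove_nabla_of_satisfies_nabla (fun ψ hψ _ => ih ψ hψ) hx.2⟩
  | or φ ψ ihφ ihψ => exact hx.imp ihφ ihψ

theorem sig_nabla (Φ : NList α) : sig (nabla Φ).toModal = ⋃ ψ ∈ Φ.toList, sig ψ.toModal := by
  simp [toModal, sig, NList.sig_diaAll, NList.sig_orAll]

theorem sig_remove_lits_subset (P : Set α) (l : List (α × Bool)) :
    sig ((lits l).remove P).toModal ⊆ sig (lits l).toModal \ P := by
  intro p
  simp [remove, toModal, sig_litsToModal]

theorem sig_remove_nabla_subset {P : Set α} {Φ : NList α}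
    (h : ∀ ψ ∈ Φ.toList, sig (ψ.remove P).toModal ⊆ sig ψ.toModal \ P) :
    sig ((nabla Φ).remove P).toModal ⊆ sig (nabla Φ).toModal \ P := by
  intro p
  simp only [remove, sig_nabla, NList.toList_remove, List.mem_map, Set.mem_iUnion, exists_prop,
    exists_exists_and_eq_and, Set.mem_sdiff, forall_exists_index, and_imp]
  exact fun ψ hψ hp => ⟨⟨ψ, hψ, (h ψ hψ hp).1⟩, (h ψ hψ hp).2⟩

theorem sig_remove_subset (P : Set α) (φ : NForm α) :
    sig (φ.remove P).toModal ⊆ sig φ.toModal \ P := by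
  induction φ using induction_on with
  | top | bot => simp [remove, toModal, sig]
  | lits l => exact sig_remove_lits_subset P l
  | nabla Φ ih => exact sig_remove_nabla_subset ih
  | litsNabla l Φ ih =>
    show sig ((lits l).remove P).toModal ∪ sig ((nabla Φ).remove P).toModal ⊆
      (sig (lits l).toModal ∪ sig (nabla Φ).toModal) \ P
    rw [Set.union_sdiff_distrib]
    exact Set.union_subset_union (sig_remove_lits_subset P l) (sig_remove_nabla_subset ih)
  | or φ ψ ihφ ihψ =>
    show sig (φ.remove P).toModal ∪ sig (ψ.remove P).toModal ⊆
      (sig φ.toModal ∪ sig ψ.toModal) \ P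
    rw [Set.union_sdiff_distrib]
    exact Set.union_subset_union ihφ ihψ

end NForm

section Bisimulation

variable {α : Type} {τ τ' : Set α} {M M' : KripkeModel α} {Z : M.World → M'.World → Prop}

theorem IsBisimulation.mono (h : τ' ⊆ τ) (hZ : IsBisimulation τ M M' Z) :
    IsBisimulation τ' M M' Z :=
  fun w w' hw => ⟨fun p hp => (hZ w w' hw).1 p (h hp), (hZ w w' hw).2⟩

theorem IsBisimulation.satisfies_iff (hZ : IsBisimulation τ M M' Z) (ψ : ModalFormula α)
    (hψ : sig ψ ⊆ τ) {w : M.World} {w' : M'.World} (hw : Z w w') :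
    Satisfies M w ψ ↔ Satisfies M' w' ψ := by
  induction ψ generalizing w w' with
  | atom p => exact (hZ w w' hw).1 p (hψ rfl)
  | top | bot => rfl
  | neg φ ih => exact not_congr (ih hψ hw)
  | or φ χ ihφ ihχ =>
    exact or_congr (ihφ (Set.subset_union_left.trans hψ) hw)
      (ihχ (Set.subset_union_right.trans hψ) hw)
  | and φ χ ihφ ihχ =>
    exact and_congr (ihφ (Set.subset_union_left.trans hψ) hw)
      (ihχ (Set.subset_union_right.trans hψ) hw)
  | dia φ ih =>
    obtain ⟨-, forth, back⟩ := hZ w w' hw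
    constructor
    · rintro ⟨v, hv, hφ⟩
      obtain ⟨v', hv', hvv'⟩ := forth v hv
      exact ⟨v', hv', (ih hψ hvv').mp hφ⟩
    · rintro ⟨v', hv', hφ⟩
      obtain ⟨v, hv, hvv'⟩ := back v' hv'
      exact ⟨v, hv, (ih hψ hvv').mpr hφ⟩
  | box φ ih =>
    obtain ⟨-, forth, back⟩ := hZ w w' hw
    constructor
    · intro h v' hv'
      obtain ⟨v, hv, hvv'⟩ := back v' hv'
      exact (ih hψ hvv').mp (h v hv)
    · intro h v hv
      obtain ⟨v', hv', hvv'⟩ := forth v hv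
      exact (ih hψ hvv').mpr (h v' hv')

end Bisimulation

namespace NForm

variable {α : Type}

def literals : NForm α → List (α × Bool)
  | lits l | litsNabla l _ => l
  | _ => []

/-- A formula without `∇` does not constrain successors; `⊤` lets every successor in `M` be
copied. -/
def children : NForm α → List (NForm α)
  | nabla Φ | litsNabla _ Φ => Φ.toList
  | _ => [top]

theorem exists_mem_children_satisfies_remove {P : Set α} {K : KripkeModel α} {u v : K.World}
    {χ : NForm α} (hu : Satisfies K u (χ.remove P).toModal) (huv : K.R u v) :
    ∃ ψ ∈ χ.children, Satisfies K v (ψ.remove P).toModal := by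
  have hnabla {Φ : NList α} (h : Satisfies K u ((nabla Φ).remove P).toModal) :
      ∃ ψ ∈ Φ.toList, Satisfies K v (ψ.remove P).toModal := by
    simp only [satisfies_nabla, remove, NList.toList_remove, List.mem_map,
      exists_exists_and_eq_and] at h
    exact h.2 v huv
  cases χ with
  | nabla Φ => exact hnabla hu
  | litsNabla l Φ => exact hnabla hu.2
  | _ => exact ⟨top, by simp [children], trivial⟩

end NForm

section WitnessModel

variable {α : Type} (M : KripkeModel α) (P : Set α)

def witnessModel : KripkeModel α where
  World := M.World × NForm α
  R x y := M.R x.1 y.1 ∧ (∃ ψ ∈ x.2.children, y.2 ∈ ψ.disjuncts) ∧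
    Satisfies M y.1 (y.2.remove P).toModal
  V p := {x | p ∈ P ∧ (p, true) ∈ x.2.literals ∨ p ∉ P ∧ x.1 ∈ M.V p}

theorem mem_witnessModel_V {p : α} {x : (witnessModel M P).World} :
    x ∈ (witnessModel M P).V p ↔ p ∈ P ∧ (p, true) ∈ x.2.literals ∨ p ∉ P ∧ x.1 ∈ M.V p :=
  Iff.rfl

theorem isBisimulation_witnessModel :
    IsBisimulation Pᶜ M (witnessModel M P)
      (fun u x => x.1 = u ∧ Satisfies M u (x.2.remove P).toModal) := by
  rintro _ x ⟨rfl, hu⟩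
  refine ⟨fun p hp => ?_, fun v huv => ?_, fun y ⟨huv, _, hv⟩ => ⟨y.1, huv, rfl, hv⟩⟩
  · rw [mem_witnessModel_V]
    simp [Set.notMem_of_mem_compl hp]
  · obtain ⟨ψ, hψ, hv⟩ := NForm.exists_mem_children_satisfies_remove hu huv
    obtain ⟨χ', hχ', hv'⟩ := (NForm.satisfies_remove_iff_exists_mem_disjuncts P M v ψ).mp hv
    exact ⟨(v, χ'), ⟨huv, ⟨ψ, hψ, hχ'⟩, hv'⟩, rfl, hv'⟩

variable {M P}

theorem satisfies_witnessModel_lits {l : List (α × Bool)} (hl : (l.map Prod.fst).Nodup)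
    {x : (witnessModel M P).World} (hx : x.2.literals = l)
    (h : Satisfies M x.1 ((NForm.lits l).remove P).toModal) :
    Satisfies (witnessModel M P) x (NForm.lits l).toModal := by
  simp only [NForm.remove, NForm.toModal, satisfies_litsToModal, List.mem_filter,
    decide_eq_true_eq] at h ⊢
  rintro ⟨p, b⟩ hpb
  by_cases hp : p ∈ P
  · have hb : (p, true) ∈ l ↔ b = true :=
      ⟨fun ht => (Prod.ext_iff.mp (List.inj_on_of_nodup_map hl ht hpb rfl)).2.symm,
        fun hb => hb ▸ hpb⟩
    simpa [mem_witnessModel_V, hp, hx] using hb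
  · simpa [mem_witnessModel_V, hp] using h _ ⟨hpb, hp⟩

theorem satisfies_witnessModel_nabla {Φ : NList α} {x : (witnessModel M P).World}
    (hx : x.2.children = Φ.toList)
    (ih : ∀ ψ ∈ Φ.toList, ∀ (v : M.World) (χ : NForm α), χ ∈ ψ.disjuncts →
      Satisfies M v (χ.remove P).toModal → Satisfies (witnessModel M P) (v, χ) ψ.toModal)
    (h : Satisfies M x.1 ((NForm.nabla Φ).remove P).toModal) :
    Satisfies (witnessModel M P) x (NForm.nabla Φ).toModal := by
  simp only [NForm.satisfies_nabla, NForm.remove, NList.toList_remove, List.mem_map,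
    forall_exists_index, and_imp, forall_apply_eq_imp_iff₂] at h ⊢
  refine ⟨fun ψ hψ => ?_,
    fun ⟨v, χ⟩ ⟨_, ⟨ψ, hψ, hχ⟩, hv⟩ => ⟨ψ, hx ▸ hψ, ih ψ (hx ▸ hψ) v χ hχ hv⟩⟩
  obtain ⟨v, huv, hv⟩ := h.1 ψ hψ
  obtain ⟨χ, hχ, hvχ⟩ := (NForm.satisfies_remove_iff_exists_mem_disjuncts P M v ψ).mp hv
  exact ⟨(v, χ), ⟨huv, ⟨ψ, hx ▸ hψ, hχ⟩, hvχ⟩, ih ψ hψ v χ hχ hvχ⟩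

theorem satisfies_witnessModel {φ : NForm α} (hφ : φ.Wf) {u : M.World} {χ : NForm α}
    (hχ : χ ∈ φ.disjuncts) (hu : Satisfies M u (χ.remove P).toModal) :
    Satisfies (witnessModel M P) (u, χ) φ.toModal := by
  induction φ using NForm.induction_on generalizing u χ with
  | top => trivial
  | bot => simp_all [NForm.disjuncts, NForm.remove, NForm.toModal, Satisfies]
  | lits l =>
    obtain rfl : χ = .lits l := by simpa [NForm.disjuncts] using hχ
    cases hφ with
    | lits _ hl => exact satisfies_witnessModel_lits hl rfl hu
  | nabla Φ ih =>
    obtain rfl : χ = .nabla Φ := by simpa [NForm.disjuncts] using hχ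
    cases hφ with
    | nabla hΦ =>
      exact satisfies_witnessModel_nabla rfl (fun ψ hψ _ _ => ih ψ hψ (hΦ.of_mem hψ)) hu
  | litsNabla l Φ ih =>
    obtain rfl : χ = .litsNabla l Φ := by simpa [NForm.disjuncts] using hχ
    cases hφ with
    | litsNabla _ hl hΦ =>
      exact ⟨satisfies_witnessModel_lits hl rfl hu.1,
        satisfies_witnessModel_nabla rfl (fun ψ hψ _ _ => ih ψ hψ (hΦ.of_mem hψ)) hu.2⟩
  | or φ ψ ihφ ihψ =>
    cases hφ with
    | or hφ hψ =>
      rcases List.mem_append.mp hχ with hχ | hχ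
      exacts [Or.inl (ihφ hφ hχ hu), Or.inr (ihψ hψ hχ hu)]

end WitnessModel

/-- Semantics of the removal operation `∃̃P`: it acts as a bisimulation
quantifier. -/
theorem remove_iff_bisimilar {α : Type} (σ P : Set α)
    (φ : NForm α) (hwf : φ.Wf) (hsig : sig φ.toModal ⊆ σ)
    (M : KripkeModel α) (w : M.World) :
    Satisfies M w ((φ.remove P).toModal) ↔
      ∃ (N : KripkeModel α) (v : N.World),
        Satisfies N v φ.toModal ∧ Bisimilar (σ \ P) M w N v := by
  constructor
  · intro hw
    obtain ⟨χ, hχ, hwχ⟩ := (NForm.satisfies_remove_iff_exists_mem_disjuncts P M w φ).mp hw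
    exact ⟨witnessModel M P, (w, χ), satisfies_witnessModel hwf hχ hwχ, _,
      (isBisimulation_witnessModel M P).mono fun p hp => hp.2, rfl, hwχ⟩
  · rintro ⟨N, v, hv, Z, hZ, hwv⟩
    have hsig' : sig (φ.remove P).toModal ⊆ σ \ P :=
      (NForm.sig_remove_subset P φ).trans (Set.sdiff_subset_sdiff_left hsig)
    exact (hZ.satisfies_iff _ hsig' hwv).mpr (NForm.satisfies_remove_of_satisfies P hv)
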